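/- Let b, k and w be positive integers such that b ≥ 6 and k ≤ w/2. If ε = k/w, then the block P_{b,w} is (ε, k, ν_b)-normal. -/

import Mathlib

/-- The one-digit weighting `ν_b^{(1)}`: `1/2^b` for `j < b`, `(2^b - b)/2^b` for `j = b`,
and `0` for `j > b`. -/
noncomputable def nu1 (b j : ℕ) : ℝ :=
  if j < b then 1 / 2 ^ b else if j = b then (2 ^ b - b) / 2 ^ b else 0

/-- The weighting `ν_b` of a block `B = (b_1, …, b_k)`: `∏_j ν_b^{(1)}(b_j)`. -/
noncomputable def nu (b : ℕ) (B : List ℕ) : ℝ := (B.map (nu1 b)).prod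

/-- The `i`-th (0-indexed) block of length `w` in base `b`, in lexicographic order. -/
def lexBlock (b w i : ℕ) : List ℕ :=
  (List.range w).map (fun j => i / b ^ (w - 1 - j) % b)

/-- The block `P_{b,w}`: running over the blocks `P` of length `w` in base `b+1` in
lexicographic order, concatenate `2^{bw}·ν_b(P) = (2^b - b)^{g_b(P)}` copies of each `P`. -/
def Pblock (b w : ℕ) : List ℕ :=
  ((List.range ((b + 1) ^ w)).map fun i =>
    (List.replicate ((2 ^ b - b) ^ ((lexBlock (b + 1) w i).count b))
      (lexBlock (b + 1) w i)).flatten).flatten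

/-- `numOcc B y` is the number of occurrences of the block `B` as a contiguous
subblock of the block `y`. -/
def numOcc (B y : List ℕ) : ℕ :=
  ((List.range (y.length + 1)).filter (fun i => B.isPrefixOf (y.drop i))).length

/-- A block `y` is `(ε, k, μ)`-normal if every block `B` of length `m` with `1 ≤ m ≤ k`
satisfies `μ(B)·|y|·(1-ε) ≤ N(B,y) ≤ μ(B)·|y|·(1+ε)`. -/
def EKNormal (ε : ℝ) (k : ℕ) (μ : List ℕ → ℝ) (y : List ℕ) : Prop :=
  ∀ B : List ℕ, 1 ≤ B.length → B.length ≤ k →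
    μ B * y.length * (1 - ε) ≤ (numOcc B y : ℝ) ∧
      (numOcc B y : ℝ) ≤ μ B * y.length * (1 + ε)

/-!
Up to the factor `2^{bw}`, the weight `(2^b - b)^{g_b(P)} = 2^{bw} ν_b(P)` with which a block `P`
of length `w` is repeated in `P_{b,w}` is a product measure, so it is invariant under rotation
of `P`. Hence, for every position `j < w`, the blocks `P` in which `B` occurs cyclically at `j`
have total weight `Y = 2^{bw} ν_b(B)`. Occurrences of `B` inside the copies of the blocks thus
contribute `(w - |B| + 1) Y`, those straddling two copies of the same block at most
`(|B| - 1) Y`, and those straddling two different blocks at most `(b + 1)^w (|B| - 1) ≤ k Y`,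
because `(b + 1)^2 ≤ 2^b` for `b ≥ 6` and `w ≤ 2 (w - k)`. As `|P_{b,w}| = 2^{bw} w`, the count
lies between `ν_b(B) |P_{b,w}| (1 - k/w)` and `ν_b(B) |P_{b,w}| (1 + k/w)`.
-/

open Finset

lemma ite_one_zero_le_ite {p q : Prop} [Decidable p] [Decidable q] (h : p → q) :
    (if p then 1 else 0 : ℕ) ≤ if q then 1 else 0 := by
  split_ifs <;> simp_all

lemma sum_range_mul_eq_sum_sum {M : Type*} [AddCommMonoid M] (f : ℕ → M) (m n : ℕ) :
    ∑ i ∈ range (m * n), f i = ∑ q ∈ range m, ∑ r ∈ range n, f (q * n + r) := by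
  induction m with
  | zero => simp
  | succ m ih => rw [Nat.succ_mul, sum_range_add, ih, sum_range_succ]

lemma List.sum_map_range (n : ℕ) (f : ℕ → ℕ) :
    ((List.range n).map f).sum = ∑ i ∈ Finset.range n, f i := by
  rw [sum_eq_multiset_sum]; rfl

section Occurrences

variable {B : List ℕ}

lemma numOcc_eq_sum (y : List ℕ) :
    numOcc B y = ∑ i ∈ range (y.length + 1), if B <+: y.drop i then 1 else 0 := by
  rw [← card_filter]
  simp [numOcc, card_def, filter_val, Multiset.range, ← List.isPrefixOf_iff_prefix]

lemma numOcc_eq_sum_of_ne_nil (hB : B ≠ []) (y : List ℕ) :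
    numOcc B y = ∑ i ∈ range y.length, if B <+: y.drop i then 1 else 0 := by
  rw [numOcc_eq_sum, sum_range_succ, List.drop_length, if_neg (mt List.prefix_nil.1 hB),
    add_zero]

lemma numOcc_append (y z : List ℕ) :
    numOcc B (y ++ z) =
      (∑ i ∈ range y.length, if B <+: (y ++ z).drop i then 1 else 0) + numOcc B z := by
  rw [numOcc_eq_sum, numOcc_eq_sum, List.length_append, Nat.add_assoc, sum_range_add]
  simp [List.drop_append, List.drop_eq_nil_of_le]

lemma numOcc_add_numOcc_le (hB : B ≠ []) (y z : List ℕ) :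
    numOcc B y + numOcc B z ≤ numOcc B (y ++ z) := by
  rw [numOcc_append, numOcc_eq_sum_of_ne_nil hB y]
  gcongr with i hi
  rw [List.drop_append_of_le_length (mem_range.1 hi).le]
  exact ite_one_zero_le_ite fun h => h.trans (List.prefix_append _ _)

lemma numOcc_append_le (hB : B ≠ []) (y z : List ℕ) :
    numOcc B (y ++ z) ≤ numOcc B y + (B.length - 1) + numOcc B z := by
  rw [numOcc_append, numOcc_eq_sum_of_ne_nil hB y]
  gcongr
  -- an occurrence starting in `y` either lies inside `y` or starts in its last `|B| - 1` places
  have hcross : #{i ∈ range y.length | y.length < i + B.length} ≤ B.length - 1 := by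
    calc _ ≤ #(Ico (y.length + 1 - B.length) y.length) :=
          card_le_card fun i hi => by simp only [mem_filter, mem_range, mem_Ico] at hi ⊢; omega
      _ ≤ B.length - 1 := by rw [Nat.card_Ico]; omega
  calc _ ≤ ∑ i ∈ range y.length, ((if B <+: y.drop i then 1 else 0) +
          if y.length < i + B.length then 1 else 0) := by
        refine sum_le_sum fun i hi => ?_
        by_cases hin : y.length < i + B.length
        · simp only [hin, if_true]
          split_ifs <;> omega
        · simp only [hin, if_false, add_zero, List.drop_append_of_le_length (mem_range.1 hi).le,
            List.isPrefix_append_of_length (show B.length ≤ (y.drop i).length by simp; omega),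
            le_refl]
    _ ≤ _ := by rw [card_filter] at hcross; rw [sum_add_distrib]; omega

lemma sum_numOcc_le_numOcc_flatten (hB : B ≠ []) (L : List (List ℕ)) :
    (L.map (numOcc B)).sum ≤ numOcc B L.flatten := by
  induction L with
  | nil => simp
  | cons P L ih =>
    simpa using (Nat.add_le_add_left ih _).trans (numOcc_add_numOcc_le hB P _)

lemma numOcc_flatten_le (hB : B ≠ []) (L : List (List ℕ)) :
    numOcc B L.flatten ≤ (L.map (numOcc B)).sum + L.length * (B.length - 1) := by
  induction L with
  | nil => simp [numOcc_eq_sum_of_ne_nil hB]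
  | cons P L ih =>
    simp only [List.flatten_cons, List.map_cons, List.sum_cons, List.length_cons, Nat.succ_mul]
    have := numOcc_append_le hB P L.flatten
    omega

lemma numOcc_eq_zero_of_mem_of_not_mem {d : ℕ} {y : List ℕ} (hd : d ∈ B) (hdy : d ∉ y) :
    numOcc B y = 0 := by
  rw [numOcc_eq_sum]
  exact sum_eq_zero fun i _ => if_neg fun h => hdy (List.drop_subset i y (h.subset hd))

def cyclicOcc (B P : List ℕ) : ℕ :=
  ∑ i ∈ range P.length, if B <+: (P ++ P).drop i then 1 else 0

lemma numOcc_flatten_replicate_le (hB : B ≠ []) {P : List ℕ} (hBP : B.length ≤ P.length)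
    (n : ℕ) : numOcc B (List.replicate n P).flatten ≤ n * cyclicOcc B P := by
  induction n with
  | zero => simp [numOcc_eq_sum_of_ne_nil hB]
  | succ n ih =>
    rw [List.replicate_succ, List.flatten_cons, numOcc_append, Nat.succ_mul, add_comm (n * _)]
    refine Nat.add_le_add (sum_le_sum fun i hi => ite_one_zero_le_ite fun hocc => ?_) ih
    rw [List.drop_append_of_le_length (mem_range.1 hi).le] at hocc ⊢
    cases n with
    | zero => simpa using hocc.trans (List.prefix_append _ P)
    | succ n =>
      rw [List.replicate_succ, List.flatten_cons, ← List.append_assoc] at hocc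
      exact (List.isPrefix_append_of_length (by simp; omega)).1 hocc

end Occurrences

section WeightedSums

def blockWeight (b : ℕ) (P : List ℕ) : ℕ := (2 ^ b - b) ^ P.count b

lemma blockWeight_pos (b : ℕ) (P : List ℕ) : 0 < blockWeight b P :=
  pow_pos (Nat.sub_pos_of_lt Nat.lt_two_pow_self) _

lemma blockWeight_append (b : ℕ) (P Q : List ℕ) :
    blockWeight b (P ++ Q) = blockWeight b P * blockWeight b Q := by
  rw [blockWeight, List.count_append, pow_add]; rfl

lemma sum_blockWeight_singleton (b : ℕ) : ∑ d ∈ range (b + 1), blockWeight b [d] = 2 ^ b := by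
  have hdigit : ∀ d ∈ range b, blockWeight b [d] = 1 := fun d hd => by
    simp [blockWeight, (mem_range.1 hd).ne]
  rw [sum_range_succ, sum_congr rfl hdigit]
  simp only [blockWeight, sum_const, card_range, smul_eq_mul, mul_one, List.count_singleton_self,
    pow_one]
  have := Nat.lt_two_pow_self (n := b)
  omega

@[simp] lemma length_lexBlock (c n i : ℕ) : (lexBlock c n i).length = n := by
  simp [lexBlock]

lemma lexBlock_one {c d : ℕ} (hd : d < c) : lexBlock c 1 d = [d] := by
  simp [lexBlock, Nat.mod_eq_of_lt hd]

lemma lexBlock_add (c n₁ n₂ q : ℕ) {r : ℕ} (hr : r < c ^ n₂) :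
    lexBlock c (n₁ + n₂) (q * c ^ n₂ + r) = lexBlock c n₁ q ++ lexBlock c n₂ r := by
  have hc : 0 < c ^ n₂ := by omega
  simp only [lexBlock, List.range_add, List.map_append, List.map_map]
  congr 1
  · refine List.map_congr_left fun j hj => ?_
    have hj : j < n₁ := List.mem_range.1 hj
    rw [show n₁ + n₂ - 1 - j = n₂ + (n₁ - 1 - j) by omega, pow_add, ← Nat.div_div_eq_div_mul,
      Nat.add_comm, Nat.add_mul_div_right _ _ hc, Nat.div_eq_of_lt hr, zero_add]
  · refine List.map_congr_left fun j hj => ?_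
    have hj : j < n₂ := List.mem_range.1 hj
    have hce : 0 < c ^ (n₂ - 1 - j) :=
      pow_pos (Nat.pos_of_ne_zero (by rintro rfl; simp [zero_pow (by omega : n₂ ≠ 0)] at hr)) _
    rw [Function.comp_apply, show n₁ + n₂ - 1 - (n₁ + j) = n₂ - 1 - j by omega,
      show c ^ n₂ = c * c ^ j * c ^ (n₂ - 1 - j) by rw [← pow_succ', ← pow_add]; congr 1; omega,
      ← mul_assoc, Nat.add_comm, Nat.add_mul_div_right _ _ hce, ← mul_assoc, mul_comm q c,
      mul_assoc, Nat.add_mul_mod_self_left]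

def weightedSum (b n : ℕ) (g : List ℕ → ℕ) : ℕ :=
  ∑ i ∈ range ((b + 1) ^ n), blockWeight b (lexBlock (b + 1) n i) * g (lexBlock (b + 1) n i)

lemma weightedSum_congr {b n : ℕ} {g g' : List ℕ → ℕ} (h : ∀ P, P.length = n → g P = g' P) :
    weightedSum b n g = weightedSum b n g' :=
  sum_congr rfl fun _ _ => by rw [h _ (length_lexBlock ..)]

lemma weightedSum_add (b n₁ n₂ : ℕ) (g : List ℕ → ℕ) :
    weightedSum b (n₁ + n₂) g =
      weightedSum b n₁ fun u => weightedSum b n₂ fun v => g (u ++ v) := by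
  simp only [weightedSum, pow_add, sum_range_mul_eq_sum_sum, mul_sum]
  refine sum_congr rfl fun q _ => sum_congr rfl fun r hr => ?_
  rw [lexBlock_add _ _ _ _ (mem_range.1 hr), blockWeight_append, mul_assoc]

lemma weightedSum_comm (b n₁ n₂ : ℕ) (h : List ℕ → List ℕ → ℕ) :
    (weightedSum b n₁ fun u => weightedSum b n₂ fun v => h u v) =
      weightedSum b n₂ fun v => weightedSum b n₁ fun u => h u v := by
  simp only [weightedSum, mul_sum]
  rw [sum_comm]
  exact sum_congr rfl fun _ _ => sum_congr rfl fun _ _ => by ring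

lemma weightedSum_sum {ι : Type*} (b n : ℕ) (s : Finset ι) (g : ι → List ℕ → ℕ) :
    (weightedSum b n fun P => ∑ j ∈ s, g j P) = ∑ j ∈ s, weightedSum b n (g j) := by
  simp only [weightedSum, mul_sum]
  exact sum_comm

lemma weightedSum_one (b : ℕ) (g : List ℕ → ℕ) :
    weightedSum b 1 g = ∑ d ∈ range (b + 1), blockWeight b [d] * g [d] := by
  rw [weightedSum, pow_one]
  exact sum_congr rfl fun d hd => by rw [lexBlock_one (mem_range.1 hd)]

lemma weightedSum_const (b n c : ℕ) : weightedSum b n (fun _ => c) = 2 ^ (b * n) * c := by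
  induction n generalizing c with
  | zero => simp [weightedSum, lexBlock, blockWeight]
  | succ n ih =>
    rw [weightedSum_add, weightedSum_one, ← sum_mul, sum_blockWeight_singleton, ih]
    ring

lemma weightedSum_prefix {b : ℕ} {B : List ℕ} (hBb : ∀ d ∈ B, d ≤ b) {n : ℕ}
    (hBn : B.length ≤ n) :
    weightedSum b n (fun P => if B <+: P then 1 else 0) =
      blockWeight b B * 2 ^ (b * (n - B.length)) := by
  induction B generalizing n with
  | nil => simp [weightedSum_const, blockWeight]
  | cons e B ih =>
    obtain ⟨n, rfl⟩ := Nat.exists_eq_add_of_le' (show 1 ≤ n by simp at hBn; omega)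
    have he : e < b + 1 := Nat.lt_succ_of_le (hBb e List.mem_cons_self)
    have hinner : ∀ d, (weightedSum b n fun v => if e :: B <+: [d] ++ v then 1 else 0) =
        if d = e then blockWeight b B * 2 ^ (b * (n - B.length)) else 0 := fun d => by
      split_ifs with hde
      · subst hde
        simpa using ih (fun x hx => hBb x (List.mem_cons_of_mem _ hx)) (by simpa using hBn)
      · simpa [Ne.symm hde] using weightedSum_const b n 0
    rw [add_comm, weightedSum_add, weightedSum_one]
    simp only [hinner, mul_ite, mul_zero, sum_ite_eq', mem_range.2 he, if_true]
    rw [← mul_assoc, ← blockWeight_append, List.singleton_append, List.length_cons,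
      show 1 + n - (B.length + 1) = n - B.length by omega]

end WeightedSums

section WeightedOccurrences

variable {b n : ℕ} {B : List ℕ}

lemma weightedSum_prefix_drop_append_self (hBb : ∀ d ∈ B, d ≤ b) (hBn : B.length ≤ n)
    {j : ℕ} (hj : j ≤ n) :
    weightedSum b n (fun P => if B <+: (P ++ P).drop j then 1 else 0) =
      blockWeight b B * 2 ^ (b * (n - B.length)) := by
  obtain ⟨n, rfl⟩ := Nat.exists_eq_add_of_le hj
  -- rotation invariance: for `P = u ++ v` with `|u| = j`, the window at `j` begins with `v ++ u`
  calc weightedSum b (j + n) (fun P => if B <+: (P ++ P).drop j then 1 else 0)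
      = weightedSum b j fun u => weightedSum b n fun v => if B <+: v ++ u then 1 else 0 := by
        rw [weightedSum_add]
        refine weightedSum_congr fun u hu => weightedSum_congr fun v hv => ?_
        rw [show (u ++ v ++ (u ++ v)).drop j = v ++ u ++ v by simp [← hu]]
        simp only [List.isPrefix_append_of_length (show B.length ≤ (v ++ u).length by simp; omega)]
    _ = weightedSum b (n + j) fun P => if B <+: P then 1 else 0 := by
        rw [weightedSum_comm, weightedSum_add]
    _ = blockWeight b B * 2 ^ (b * (j + n - B.length)) := by
        rw [weightedSum_prefix hBb (by omega), add_comm n j]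

lemma numOcc_eq_sum_prefix_drop_append_self (hB : B ≠ []) {P : List ℕ}
    (hBP : B.length ≤ P.length) :
    numOcc B P = ∑ j ∈ range (P.length - B.length + 1),
      if B <+: (P ++ P).drop j then 1 else 0 := by
  rw [numOcc_eq_sum, show P.length + 1 = P.length - B.length + 1 + B.length by omega,
    sum_range_add]
  have htail : ∀ j ∈ range B.length,
      (if B <+: P.drop (P.length - B.length + 1 + j) then 1 else 0) = 0 := fun j _ =>
    if_neg fun h => by
      have := h.length_le
      rw [List.length_drop] at this
      have := List.length_pos_iff.2 hB
      omega
  rw [sum_congr rfl htail, sum_const_zero, add_zero]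
  refine sum_congr rfl fun j hj => ?_
  rw [List.drop_append_of_le_length (by simp at hj; omega)]
  simp only [List.isPrefix_append_of_length (show B.length ≤ (P.drop j).length by
    simp at hj ⊢; omega)]

lemma weightedSum_numOcc (hB : B ≠ []) (hBb : ∀ d ∈ B, d ≤ b) (hBn : B.length ≤ n) :
    weightedSum b n (numOcc B) =
      (n - B.length + 1) * (blockWeight b B * 2 ^ (b * (n - B.length))) := by
  rw [weightedSum_congr (g' := fun P => ∑ j ∈ range (n - B.length + 1),
      if B <+: (P ++ P).drop j then 1 else 0)
      fun P hP => hP ▸ numOcc_eq_sum_prefix_drop_append_self hB (hP ▸ hBn),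
    weightedSum_sum, sum_congr rfl fun j hj =>
      weightedSum_prefix_drop_append_self hBb hBn (by simp at hj; omega)]
  simp

lemma weightedSum_cyclicOcc (hBb : ∀ d ∈ B, d ≤ b) (hBn : B.length ≤ n) :
    weightedSum b n (cyclicOcc B) = n * (blockWeight b B * 2 ^ (b * (n - B.length))) := by
  rw [weightedSum_congr (g' := fun P => ∑ j ∈ range n, if B <+: (P ++ P).drop j then 1 else 0)
      fun P hP => by rw [cyclicOcc, hP],
    weightedSum_sum, sum_congr rfl fun j hj =>
      weightedSum_prefix_drop_append_self hBb hBn (mem_range.1 hj).le]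
  simp

end WeightedOccurrences

section Pblock

variable {b w : ℕ} {B : List ℕ}

lemma length_Pblock : (Pblock b w).length = 2 ^ (b * w) * w := by
  rw [← weightedSum_const, Pblock, List.length_flatten, List.map_map, List.sum_map_range]
  refine sum_congr rfl fun i _ => ?_
  simp [blockWeight]

lemma weightedSum_numOcc_le_numOcc_Pblock (hB : B ≠ []) :
    weightedSum b w (numOcc B) ≤ numOcc B (Pblock b w) := by
  refine le_trans ?_ (sum_numOcc_le_numOcc_flatten hB _)
  rw [List.map_map, List.sum_map_range]
  refine sum_le_sum fun i _ => ?_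
  simpa [blockWeight] using sum_numOcc_le_numOcc_flatten hB
    (List.replicate (blockWeight b (lexBlock (b + 1) w i)) (lexBlock (b + 1) w i))

lemma numOcc_Pblock_le_weightedSum_cyclicOcc (hB : B ≠ []) (hBw : B.length ≤ w) :
    numOcc B (Pblock b w) ≤ weightedSum b w (cyclicOcc B) + (b + 1) ^ w * (B.length - 1) := by
  refine (numOcc_flatten_le hB _).trans ?_
  rw [List.map_map, List.sum_map_range, List.length_map, List.length_range]
  refine Nat.add_le_add_right (sum_le_sum fun i _ => ?_) _
  exact numOcc_flatten_replicate_le hB (P := lexBlock (b + 1) w i) (by simpa) _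

lemma le_of_mem_Pblock {d : ℕ} (hd : d ∈ Pblock b w) : d ≤ b := by
  obtain ⟨_, hl, hdl⟩ := List.mem_flatten.1 hd
  obtain ⟨i, -, rfl⟩ := List.mem_map.1 hl
  obtain ⟨P, hP, hdP⟩ := List.mem_flatten.1 hdl
  rw [List.eq_of_mem_replicate hP, lexBlock, List.mem_map] at hdP
  obtain ⟨j, -, rfl⟩ := hdP
  exact Nat.lt_succ_iff.1 (Nat.mod_lt _ b.succ_pos)

lemma numOcc_Pblock_eq_zero {d : ℕ} (hd : d ∈ B) (hbd : b < d) : numOcc B (Pblock b w) = 0 :=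
  numOcc_eq_zero_of_mem_of_not_mem hd fun h => (le_of_mem_Pblock h).not_gt hbd

lemma nu1_mul_two_pow {d : ℕ} (hd : d ≤ b) : nu1 b d * 2 ^ b = blockWeight b [d] := by
  rcases hd.lt_or_eq with hd | rfl
  · simp [nu1, hd, blockWeight, hd.ne]
  · simp [nu1, blockWeight, Nat.cast_sub Nat.lt_two_pow_self.le]

lemma nu_mul_two_pow (hBb : ∀ d ∈ B, d ≤ b) :
    nu b B * 2 ^ (b * B.length) = blockWeight b B := by
  induction B with
  | nil => simp [nu, blockWeight]
  | cons d B ih =>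
    calc nu b (d :: B) * 2 ^ (b * (d :: B).length)
        = (nu1 b d * 2 ^ b) * (nu b B * 2 ^ (b * B.length)) := by
          simp only [nu, List.map_cons, List.prod_cons, List.length_cons]; ring
      _ = blockWeight b (d :: B) := by
          rw [nu1_mul_two_pow (hBb d List.mem_cons_self),
            ih fun x hx => hBb x (List.mem_cons_of_mem _ hx), ← Nat.cast_mul, ← blockWeight_append]
          rfl

lemma nu_eq_zero {d : ℕ} (hd : d ∈ B) (hbd : b < d) : nu b B = 0 :=
  List.prod_eq_zero (List.mem_map.2 ⟨d, hd, by simp [nu1, hbd.not_gt, hbd.ne']⟩)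

lemma nu_mul_length_Pblock (hBb : ∀ d ∈ B, d ≤ b) (hBw : B.length ≤ w) :
    nu b B * (Pblock b w).length = (blockWeight b B * 2 ^ (b * (w - B.length)) : ℕ) * w := by
  rw [length_Pblock, show b * w = b * B.length + b * (w - B.length) by rw [← mul_add]; congr; omega]
  push_cast [← nu_mul_two_pow hBb, pow_add]
  ring

lemma succ_sq_le_two_pow (hb : 6 ≤ b) : (b + 1) ^ 2 ≤ 2 ^ b := by
  induction b, hb using Nat.le_induction with
  | base => norm_num
  | succ n hn ih =>
    calc (n + 1 + 1) ^ 2 ≤ 2 * (n + 1) ^ 2 := by nlinarith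
      _ ≤ 2 * 2 ^ n := by omega
      _ = 2 ^ (n + 1) := by ring

lemma succ_pow_le_two_pow {k : ℕ} (hb : 6 ≤ b) (hkw : 2 * k ≤ w) :
    (b + 1) ^ w ≤ 2 ^ (b * (w - k)) :=
  calc (b + 1) ^ w ≤ ((b + 1) ^ 2) ^ (w - k) := by
        rw [← pow_mul]; exact Nat.pow_le_pow_right (by omega) (by omega)
    _ ≤ 2 ^ (b * (w - k)) := by rw [pow_mul]; exact Nat.pow_le_pow_left (succ_sq_le_two_pow hb) _

lemma numOcc_Pblock_bounds {k : ℕ} (hb : 6 ≤ b) (hkw : 2 * k ≤ w) (hB : B ≠ [])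
    (hBk : B.length ≤ k) (hBb : ∀ d ∈ B, d ≤ b) :
    (w - k) * (blockWeight b B * 2 ^ (b * (w - B.length))) ≤ numOcc B (Pblock b w) ∧
      numOcc B (Pblock b w) ≤ (w + k) * (blockWeight b B * 2 ^ (b * (w - B.length))) := by
  set Y := blockWeight b B * 2 ^ (b * (w - B.length))
  have hBw : B.length ≤ w := by omega
  have hcount : (b + 1) ^ w ≤ Y := calc
    (b + 1) ^ w ≤ 2 ^ (b * (w - k)) := succ_pow_le_two_pow hb hkw
    _ ≤ 2 ^ (b * (w - B.length)) := Nat.pow_le_pow_right two_pos (by gcongr)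
    _ ≤ Y := Nat.le_mul_of_pos_left _ (blockWeight_pos b B)
  constructor
  · calc (w - k) * Y ≤ (w - B.length + 1) * Y := by gcongr; omega
      _ = weightedSum b w (numOcc B) := (weightedSum_numOcc hB hBb hBw).symm
      _ ≤ _ := weightedSum_numOcc_le_numOcc_Pblock hB
  · calc numOcc B (Pblock b w) ≤ w * Y + (b + 1) ^ w * (B.length - 1) := by
          rw [← weightedSum_cyclicOcc hBb hBw]
          exact numOcc_Pblock_le_weightedSum_cyclicOcc hB hBw
      _ ≤ w * Y + Y * k := by gcongr; omega
      _ = (w + k) * Y := by ring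

end Pblock

theorem stmt5_general (b k w : ℕ) (hb : 6 ≤ b) (hkw : 2 * k ≤ w) :
    EKNormal ((k : ℝ) / (w : ℝ)) k (nu b) (Pblock b w) := by
  intro B hB1 hBk
  by_cases hBb : ∃ d ∈ B, b < d
  · obtain ⟨d, hdB, hbd⟩ := hBb
    simp [nu_eq_zero hdB hbd, numOcc_Pblock_eq_zero hdB hbd]
  push Not at hBb
  have hB : B ≠ [] := List.ne_nil_of_length_pos hB1
  have hw : (0 : ℝ) < w := by norm_cast; omega
  obtain ⟨hlow, hup⟩ := numOcc_Pblock_bounds (w := w) hb hkw hB hBk hBb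
  rw [nu_mul_length_Pblock hBb (by omega)]
  generalize blockWeight b B * 2 ^ (b * (w - B.length)) = Y at hlow hup
  constructor
  · calc (Y : ℝ) * w * (1 - k / w) = ((w - k : ℕ) : ℝ) * Y := by
          rw [Nat.cast_sub (by omega)]; field_simp
      _ ≤ numOcc B (Pblock b w) := by exact_mod_cast hlow
  · calc (numOcc B (Pblock b w) : ℝ) ≤ ((w + k : ℕ) : ℝ) * Y := by exact_mod_cast hup
      _ = Y * w * (1 + k / w) := by push_cast; field_simp

/-- If `b, k, w` are positive integers with `b ≥ 6` and `2k ≤ w`, and `ε = k/w`, then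
the block `P_{b,w}` is `(ε, k, ν_b)`-normal. -/
theorem stmt5 (b k w : ℕ) (hb : 6 ≤ b) (hk : 0 < k) (hw : 0 < w) (hkw : 2 * k ≤ w) :
    EKNormal ((k : ℝ) / (w : ℝ)) k (nu b) (Pblock b w) :=
  stmt5_general b k w hb hkw
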